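/- Let P be a double histogram, let k ≥ 0, and let s, t be vertices of P with hop distance d(s,t) ≤ k in the visibility graph G(P). Then t ∈ I^k(s). -/

import Mathlib

open Classical Set

noncomputable section

/-- A *double histogram*: an `x`-monotone orthogonal polygon in general position whose
base line lies on the `x`-axis.  It is described by its bottom columns (over the
breakpoints `xs` with depths `d < 0`) and its top columns (over the breakpoints `ys`
with heights `h > 0`).  A *simple histogram* is the special case `n = 1`, where the
upper boundary is the single (base) edge at height `h 0`. -/
structure DoubleHistogram where
  m : ℕ
  n : ℕ
  hm : 0 < m
  hn : 0 < n
  xs : Fin (m + 1) → ℝ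
  ys : Fin (n + 1) → ℝ
  d : Fin m → ℝ
  h : Fin n → ℝ
  xs_mono : StrictMono xs
  ys_mono : StrictMono ys
  left_eq : ys 0 = xs 0
  right_eq : ys (Fin.last n) = xs (Fin.last m)
  d_neg : ∀ i, d i < 0
  h_pos : ∀ j, 0 < h j
  /-- general position: no three vertices on a horizontal line -/
  d_inj : Function.Injective d
  h_inj : Function.Injective h
  /-- general position: no three vertices on a vertical line -/
  gen_pos : ∀ (i : Fin (m + 1)) (j : Fin (n + 1)), xs i = ys j →
      (i = 0 ∧ j = 0) ∨ (i = Fin.last m ∧ j = Fin.last n)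

/-- Among the reals in `A`, the one of minimum absolute value
(i.e. "closest to the base line"). -/
def closestToBase (A : Set ℝ) : ℝ :=
  sSup {y | y ∈ A ∧ ∀ y' ∈ A, |y| ≤ |y'|}

/-- The leftmost point of `S` among those minimizing the distance `|y|` to the base line. -/
def leftmostLowest (S : Set (ℝ × ℝ)) : ℝ × ℝ :=
  (sInf {x | ∃ y, (x, y) ∈ S ∧ ∀ q ∈ S, |y| ≤ |q.2|},
    closestToBase {y | (sInf {x | ∃ y', (x, y') ∈ S ∧ ∀ q ∈ S, |y'| ≤ |q.2|}, y) ∈ S})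

namespace DoubleHistogram

variable (H : DoubleHistogram)

/-- The polygon `P`, as a closed region of the plane. -/
def region : Set (ℝ × ℝ) :=
  (⋃ i : Fin H.m, Icc (H.xs i.castSucc) (H.xs i.succ) ×ˢ Icc (H.d i) 0) ∪
    ⋃ j : Fin H.n, Icc (H.ys j.castSucc) (H.ys j.succ) ×ˢ Icc 0 (H.h j)

/-- The vertex set `V(P)`. -/
def verts : Set (ℝ × ℝ) :=
  (⋃ i : Fin H.m,
      ({(H.xs i.castSucc, H.d i), (H.xs i.succ, H.d i)} : Set (ℝ × ℝ))) ∪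
    ⋃ j : Fin H.n,
      ({(H.ys j.castSucc, H.h j), (H.ys j.succ, H.h j)} : Set (ℝ × ℝ))

/-- `p` and `q` are co-visible: the axis-parallel rectangle they span lies in `P`. -/
def covisible (p q : ℝ × ℝ) : Prop :=
  Icc (min p.1 q.1) (max p.1 q.1) ×ˢ Icc (min p.2 q.2) (max p.2 q.2) ⊆ H.region

lemma covisible_symm {p q : ℝ × ℝ} (hpq : H.covisible p q) : H.covisible q p := by
  unfold covisible at hpq ⊢
  rwa [min_comm q.1 p.1, max_comm q.1 p.1, min_comm q.2 p.2, max_comm q.2 p.2]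

/-- The (unweighted) visibility graph `G(P)` on the vertices of `P`. -/
def visGraph : SimpleGraph ↥H.verts where
  Adj u v := u ≠ v ∧ H.covisible ↑u ↑v
  symm := ⟨fun _ _ hu => ⟨hu.1.symm, H.covisible_symm hu.2⟩⟩
  loopless := ⟨fun _ hu => hu.1 rfl⟩

/-- The closed neighborhood `N(v)`: `v` together with the vertices it sees. -/
def Nbr (v : ℝ × ℝ) : Set (ℝ × ℝ) :=
  {w | w ∈ H.verts ∧ (w = v ∨ H.covisible v w)}

/-- The abscissa where the leftward horizontal ray from `v` hits the boundary of `P`. -/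
def lhit (v : ℝ × ℝ) : ℝ :=
  sInf {x | x ≤ v.1 ∧ Icc x v.1 ×ˢ ({v.2} : Set ℝ) ⊆ H.region}

/-- The abscissa where the rightward horizontal ray from `v` hits the boundary of `P`. -/
def rhit (v : ℝ × ℝ) : ℝ :=
  sSup {x | v.1 ≤ x ∧ Icc v.1 x ×ˢ ({v.2} : Set ℝ) ⊆ H.region}

/-- The `y`-coordinate, among the vertices of `P` with abscissa `x` lying on the same side
of the base line as `side`, of the one closest to the base line (i.e. the endpoint of the
vertical edge at `x` closer to the base line). -/
def nearY (x : ℝ) (side : ℝ) : ℝ :=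
  if side < 0 then sSup {y | y < 0 ∧ (x, y) ∈ H.verts}
  else sInf {y | 0 < y ∧ (x, y) ∈ H.verts}

/-- The left point `ℓ(v)` (double-histogram version): if the leftward ray from `v` hits the
left boundary then the hit point, otherwise the endpoint of the hit vertical edge closer to
the base line. -/
def lpt (v : ℝ × ℝ) : ℝ × ℝ :=
  if H.lhit v = H.xs 0 then (H.xs 0, v.2) else (H.lhit v, H.nearY (H.lhit v) v.2)

/-- The right point `r(v)` (double-histogram version). -/
def rpt (v : ℝ × ℝ) : ℝ × ℝ :=
  if H.rhit v = H.xs (Fin.last H.m) then (H.xs (Fin.last H.m), v.2)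
  else (H.rhit v, H.nearY (H.rhit v) v.2)

/-- The left base vertex (for a simple histogram, i.e. `n = 1`). -/
def baseL : ℝ × ℝ := (H.xs 0, H.h ⟨0, H.hn⟩)

/-- The right base vertex (for a simple histogram, i.e. `n = 1`). -/
def baseR : ℝ × ℝ := (H.xs (Fin.last H.m), H.h ⟨0, H.hn⟩)

/-- The left point `ℓ(v)` (simple-histogram version): if the leftward ray from `v` hits the
left boundary then the left base vertex, otherwise the endpoint of the hit vertical edge
closer to the base edge. -/
def lptS (v : ℝ × ℝ) : ℝ × ℝ :=
  if H.lhit v = H.xs 0 then H.baseL else (H.lhit v, H.nearY (H.lhit v) v.2)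

/-- The right point `r(v)` (simple-histogram version). -/
def rptS (v : ℝ × ℝ) : ℝ × ℝ :=
  if H.rhit v = H.xs (Fin.last H.m) then H.baseR
  else (H.rhit v, H.nearY (H.rhit v) v.2)

/-- The interval `[p, q]`: all vertices of `P` between `p` and `q`. -/
def ivl (p q : ℝ × ℝ) : Set (ℝ × ℝ) :=
  {u | u ∈ H.verts ∧ p.1 ≤ u.1 ∧ u.1 ≤ q.1}

/-- The interval `I(v) = [ℓ(v), r(v)]` of a vertex (double-histogram version). -/
def Iv (v : ℝ × ℝ) : Set (ℝ × ℝ) := H.ivl (H.lpt v) (H.rpt v)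

/-- The interval `I(v) = [ℓ(v), r(v)]` of a vertex (simple-histogram version). -/
def IvS (v : ℝ × ℝ) : Set (ℝ × ℝ) := H.ivl (H.lptS v) (H.rptS v)

/-- The corresponding vertex `cv(v)`: the unique other vertex sharing a horizontal edge
(equivalently, by general position, the `y`-coordinate) with `v`. -/
def cv (v : ℝ × ℝ) : ℝ × ℝ :=
  (sSup {x | (x, v.2) ∈ H.verts ∧ x ≠ v.1}, v.2)

/-- `v` is a left vertex: the left endpoint of its horizontal edge. -/
def IsLeftVert (v : ℝ × ℝ) : Prop :=
  (∃ i : Fin H.m, v = (H.xs i.castSucc, H.d i)) ∨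
    ∃ j : Fin H.n, v = (H.ys j.castSucc, H.h j)

/-- `v` is a right vertex: the right endpoint of its horizontal edge. -/
def IsRightVert (v : ℝ × ℝ) : Prop :=
  (∃ i : Fin H.m, v = (H.xs i.succ, H.d i)) ∨
    ∃ j : Fin H.n, v = (H.ys j.succ, H.h j)

/-- `v` is an `ℓ`-reflex vertex (a left vertex with interior angle `3π/2`). -/
def IsLReflex (v : ℝ × ℝ) : Prop :=
  (∃ i : Fin H.m, ∃ _ : 0 < (i : ℕ),
      v = (H.xs i.castSucc, H.d i) ∧
        H.d ⟨(i : ℕ) - 1, lt_of_le_of_lt (Nat.sub_le _ _) i.isLt⟩ < H.d i) ∨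
    ∃ j : Fin H.n, ∃ _ : 0 < (j : ℕ),
      v = (H.ys j.castSucc, H.h j) ∧
        H.h j < H.h ⟨(j : ℕ) - 1, lt_of_le_of_lt (Nat.sub_le _ _) j.isLt⟩

/-- `v` is an `r`-reflex vertex (a right vertex with interior angle `3π/2`). -/
def IsRReflex (v : ℝ × ℝ) : Prop :=
  (∃ i : Fin H.m, ∃ hi : (i : ℕ) + 1 < H.m,
      v = (H.xs i.succ, H.d i) ∧ H.d ⟨(i : ℕ) + 1, hi⟩ < H.d i) ∨
    ∃ j : Fin H.n, ∃ hj : (j : ℕ) + 1 < H.n,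
      v = (H.ys j.succ, H.h j) ∧ H.h j < H.h ⟨(j : ℕ) + 1, hj⟩

/-- `v` is a reflex vertex. -/
def IsReflex (v : ℝ × ℝ) : Prop := H.IsLReflex v ∨ H.IsRReflex v

/-- The near dominator `nd(s,t)`: for `t` strictly right of `s`, the rightmost vertex of
`N(s)` to the left of `t`, ties broken towards the base line (symmetric otherwise). -/
def nd (s t : ℝ × ℝ) : ℝ × ℝ :=
  if s.1 < t.1 then
    let nx := sSup {x | (∃ y, (x, y) ∈ H.Nbr s) ∧ x ≤ t.1}
    (nx, closestToBase {y | (nx, y) ∈ H.Nbr s})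
  else
    let nx := sInf {x | (∃ y, (x, y) ∈ H.Nbr s) ∧ t.1 ≤ x}
    (nx, closestToBase {y | (nx, y) ∈ H.Nbr s})

/-- The far dominator `fd(s,t)`: for `t` strictly right of `s`, the leftmost vertex of
`N(s)` to the right of `t`, ties broken towards the base line; if there is no such vertex,
the point `r(s)` (symmetric otherwise). -/
def fd (s t : ℝ × ℝ) : ℝ × ℝ :=
  if s.1 < t.1 then
    if ∃ w ∈ H.Nbr s, t.1 ≤ w.1 then
      let nx := sInf {x | (∃ y, (x, y) ∈ H.Nbr s) ∧ t.1 ≤ x}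
      (nx, closestToBase {y | (nx, y) ∈ H.Nbr s})
    else H.rpt s
  else
    if ∃ w ∈ H.Nbr s, w.1 ≤ t.1 then
      let nx := sSup {x | (∃ y, (x, y) ∈ H.Nbr s) ∧ x ≤ t.1}
      (nx, closestToBase {y | (nx, y) ∈ H.Nbr s})
    else H.lpt s

/-- The sequence `a^i(s)`: `a^0(s) = s`, and `a^i(s)` is the leftmost vertex of
`A^i(s) = {v ∈ N(s) : ℓ(v)_x < ℓ(a^{i-1}(s))_x}` (ties towards the base line),
or `a^{i-1}(s)` if `A^i(s)` is empty. -/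
def aSeq (s : ℝ × ℝ) : ℕ → ℝ × ℝ := fun k =>
  Nat.rec (motive := fun _ => ℝ × ℝ) s
    (fun _ prev =>
      let A : Set (ℝ × ℝ) := {v | v ∈ H.Nbr s ∧ (H.lpt v).1 < (H.lpt prev).1}
      if A = ∅ then prev
      else
        let ax := sInf {x | ∃ y, (x, y) ∈ A}
        (ax, closestToBase {y | (ax, y) ∈ A}))
    k

/-- The sequence `b^i(s)`: `b^0(s) = s`, and `b^i(s)` is the rightmost vertex of
`B^i(s) = {v ∈ N(s) : r(v)_x > r(b^{i-1}(s))_x}` (ties towards the base line),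
or `b^{i-1}(s)` if `B^i(s)` is empty. -/
def bSeq (s : ℝ × ℝ) : ℕ → ℝ × ℝ := fun k =>
  Nat.rec (motive := fun _ => ℝ × ℝ) s
    (fun _ prev =>
      let B : Set (ℝ × ℝ) := {v | v ∈ H.Nbr s ∧ (H.rpt prev).1 < (H.rpt v).1}
      if B = ∅ then prev
      else
        let bx := sSup {x | ∃ y, (x, y) ∈ B}
        (bx, closestToBase {y | (bx, y) ∈ B}))
    k

/-- The pair of the `k`-th bottom dominator `bd^k(s)` and `k`-th top dominator `td^k(s)`:
`bd^0(s) = td^0(s) = s`; for `k > 0`, with `I^k(s) = I(bd^{k-1}(s)) ∪ I(td^{k-1}(s))`,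
`bd^k(s)` is the leftmost vertex of `I^k(s)⁻` minimizing the distance to the base line,
and `td^k(s)` the leftmost vertex of `I^k(s)⁺` minimizing the distance to the base line;
if one of the two sets is empty, the corresponding dominator equals the other one. -/
def bdtd (s : ℝ × ℝ) : ℕ → (ℝ × ℝ) × (ℝ × ℝ) := fun k =>
  Nat.rec (motive := fun _ => (ℝ × ℝ) × (ℝ × ℝ)) (s, s)
    (fun _ p =>
      let J : Set (ℝ × ℝ) := H.Iv p.1 ∪ H.Iv p.2
      let Jm : Set (ℝ × ℝ) := {v | v ∈ J ∧ v.2 < 0}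
      let Jp : Set (ℝ × ℝ) := {v | v ∈ J ∧ 0 < v.2}
      if Jm = ∅ then (leftmostLowest Jp, leftmostLowest Jp)
      else if Jp = ∅ then (leftmostLowest Jm, leftmostLowest Jm)
      else (leftmostLowest Jm, leftmostLowest Jp))
    k

/-- The `k`-th interval `I^k(s)`: `I^0(s) = {s}` and
`I^{k+1}(s) = I(bd^k(s)) ∪ I(td^k(s))`. -/
def Ipow (s : ℝ × ℝ) : ℕ → Set (ℝ × ℝ) := fun k =>
  Nat.rec (motive := fun _ => Set (ℝ × ℝ)) {s}
    (fun k _ => H.Iv (H.bdtd s k).1 ∪ H.Iv (H.bdtd s k).2) k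

/-- `w` lies on a shortest path from `s` to `t` in the visibility graph. -/
def OnShortestPath (s t w : ↥H.verts) : Prop :=
  ∃ p : H.visGraph.Walk s t, p.length = H.visGraph.dist s t ∧ w ∈ p.support

end DoubleHistogram

/-- A routing scheme for a graph `G`: every vertex carries a binary label and a binary
routing table, and the routing function maps (link table of the current vertex, routing
table of the current vertex, label of the target, current header) to the next vertex
together with the new header. -/
structure RoutingScheme {V : Type} (G : SimpleGraph V) where
  lab : V → List Bool
  tab : V → List Bool
  route : Set (List Bool) → List Bool → List Bool → List Bool → V × List Bool

namespace RoutingScheme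

variable {V : Type} {G : SimpleGraph V} (R : RoutingScheme G)

/-- One routing step at vertex `p` with header `h`, towards the target `t`: the routing
function is applied to the link table of `p` (the labels of its closed neighborhood),
the routing table of `p`, the label of `t` and the header `h`. -/
def step (t p : V) (h : List Bool) : V × List Bool :=
  R.route (R.lab '' {w | w = p ∨ G.Adj p w}) (R.tab p) (R.lab t) h

/-- The routing sequence from `s` towards `t`, starting with the empty header. -/
def seq (s t : V) : ℕ → V × List Bool := fun k =>
  Nat.rec (motive := fun _ => V × List Bool) (s, ([] : List Bool))
    (fun _ q => R.step t q.1 q.2) k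

end RoutingScheme


namespace DoubleHistogram

variable (H : DoubleHistogram)

/-! ### Basic facts about the region and vertices -/

lemma botL_mem (i : Fin H.m) : ((H.xs i.castSucc, H.d i) : ℝ × ℝ) ∈ H.verts :=
  Or.inl (Set.mem_iUnion.2 ⟨i, Or.inl rfl⟩)

lemma botR_mem (i : Fin H.m) : ((H.xs i.succ, H.d i) : ℝ × ℝ) ∈ H.verts :=
  Or.inl (Set.mem_iUnion.2 ⟨i, Or.inr rfl⟩)

lemma topL_mem (j : Fin H.n) : ((H.ys j.castSucc, H.h j) : ℝ × ℝ) ∈ H.verts :=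
  Or.inr (Set.mem_iUnion.2 ⟨j, Or.inl rfl⟩)

lemma topR_mem (j : Fin H.n) : ((H.ys j.succ, H.h j) : ℝ × ℝ) ∈ H.verts :=
  Or.inr (Set.mem_iUnion.2 ⟨j, Or.inr rfl⟩)

lemma verts_cases {v : ℝ × ℝ} (hv : v ∈ H.verts) :
    (∃ i : Fin H.m, v.2 = H.d i ∧ (v.1 = H.xs i.castSucc ∨ v.1 = H.xs i.succ)) ∨
    (∃ j : Fin H.n, v.2 = H.h j ∧ (v.1 = H.ys j.castSucc ∨ v.1 = H.ys j.succ)) := by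
  rcases hv with hv | hv
  · obtain ⟨i, hi⟩ := Set.mem_iUnion.1 hv
    rcases hi with hi | hi <;> subst hi
    · exact Or.inl ⟨i, rfl, Or.inl rfl⟩
    · exact Or.inl ⟨i, rfl, Or.inr rfl⟩
  · obtain ⟨j, hj⟩ := Set.mem_iUnion.1 hv
    rcases hj with hj | hj <;> subst hj
    · exact Or.inr ⟨j, rfl, Or.inl rfl⟩
    · exact Or.inr ⟨j, rfl, Or.inr rfl⟩

lemma verts_snd_ne {v : ℝ × ℝ} (hv : v ∈ H.verts) : v.2 ≠ 0 := by
  rcases H.verts_cases hv with ⟨i, hi, -⟩ | ⟨j, hj, -⟩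
  · rw [hi]; exact (H.d_neg i).ne
  · rw [hj]; exact (H.h_pos j).ne'

lemma verts_finite : H.verts.Finite := by
  unfold verts
  apply Set.Finite.union <;> apply Set.finite_iUnion <;> intro i <;>
    exact (Set.finite_singleton _).insert _

lemma mem_region_of_bot {x y : ℝ} (i : Fin H.m) (h1 : H.xs i.castSucc ≤ x)
    (h2 : x ≤ H.xs i.succ) (h3 : H.d i ≤ y) (h4 : y ≤ 0) : (x, y) ∈ H.region :=
  Or.inl (Set.mem_iUnion.2 ⟨i, ⟨⟨h1, h2⟩, ⟨h3, h4⟩⟩⟩)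

lemma mem_region_of_top {x y : ℝ} (j : Fin H.n) (h1 : H.ys j.castSucc ≤ x)
    (h2 : x ≤ H.ys j.succ) (h3 : 0 ≤ y) (h4 : y ≤ H.h j) : (x, y) ∈ H.region :=
  Or.inr (Set.mem_iUnion.2 ⟨j, ⟨⟨h1, h2⟩, ⟨h3, h4⟩⟩⟩)

lemma mem_region_iff_bot {x y : ℝ} (hy : y < 0) :
    (x, y) ∈ H.region ↔
      ∃ i : Fin H.m, H.xs i.castSucc ≤ x ∧ x ≤ H.xs i.succ ∧ H.d i ≤ y := by
  constructor
  · rintro (hv | hv)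
    · obtain ⟨i, ⟨hx1, hx2⟩, hy1, -⟩ := Set.mem_iUnion.1 hv
      exact ⟨i, hx1, hx2, hy1⟩
    · obtain ⟨j, -, hy1, -⟩ := Set.mem_iUnion.1 hv
      exact absurd hy1 (not_le.2 hy)
  · rintro ⟨i, h1, h2, h3⟩
    exact H.mem_region_of_bot i h1 h2 h3 hy.le

lemma mem_region_iff_top {x y : ℝ} (hy : 0 < y) :
    (x, y) ∈ H.region ↔
      ∃ j : Fin H.n, H.ys j.castSucc ≤ x ∧ x ≤ H.ys j.succ ∧ y ≤ H.h j := by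
  constructor
  · rintro (hv | hv)
    · obtain ⟨i, -, -, hy2⟩ := Set.mem_iUnion.1 hv
      exact absurd hy2 (not_le.2 hy)
    · obtain ⟨j, ⟨hx1, hx2⟩, -, hy2⟩ := Set.mem_iUnion.1 hv
      exact ⟨j, hx1, hx2, hy2⟩
  · rintro ⟨j, h1, h2, h3⟩
    exact H.mem_region_of_top j h1 h2 hy.le h3

lemma verts_subset_region : H.verts ⊆ H.region := by
  intro v hv
  rcases H.verts_cases hv with ⟨i, hi, hx⟩ | ⟨j, hj, hx⟩
  · have hcs : H.xs i.castSucc ≤ H.xs i.succ :=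
      H.xs_mono.monotone (Fin.castSucc_lt_succ).le
    have := H.mem_region_of_bot i (x := v.1) (y := v.2) ?_ ?_ (ge_of_eq hi)
      (hi ▸ (H.d_neg i).le)
    · rwa [Prod.mk.eta] at this
    · rcases hx with h | h
      · rw [h]
      · rw [h]; exact hcs
    · rcases hx with h | h
      · rw [h]; exact hcs
      · rw [h]
  · have hcs : H.ys j.castSucc ≤ H.ys j.succ :=
      H.ys_mono.monotone (Fin.castSucc_lt_succ).le
    have := H.mem_region_of_top j (x := v.1) (y := v.2) ?_ ?_
      (hj ▸ (H.h_pos j).le) (le_of_eq hj)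
    · rwa [Prod.mk.eta] at this
    · rcases hx with h | h
      · rw [h]
      · rw [h]; exact hcs
    · rcases hx with h | h
      · rw [h]; exact hcs
      · rw [h]

lemma region_closed : IsClosed H.region := by
  unfold region
  apply IsClosed.union <;> apply isClosed_iUnion_of_finite <;> intro i <;>
    exact isClosed_Icc.prod isClosed_Icc

lemma region_mono_bot {x y y' : ℝ} (h : (x, y) ∈ H.region) (h1 : y ≤ y')
    (h2 : y' ≤ 0) : (x, y') ∈ H.region := by
  rcases lt_or_eq_of_le (h1.trans h2) with hy | hy
  · obtain ⟨i, hx1, hx2, hy1⟩ := (H.mem_region_iff_bot hy).1 h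
    exact H.mem_region_of_bot i hx1 hx2 (hy1.trans h1) h2
  · have : y' = y := le_antisymm (hy ▸ h2) (hy ▸ h1)
    rwa [this]

lemma region_mono_top {x y y' : ℝ} (h : (x, y) ∈ H.region) (h1 : y' ≤ y)
    (h2 : 0 ≤ y') : (x, y') ∈ H.region := by
  rcases lt_or_eq_of_le (h2.trans h1) with hy | hy
  · obtain ⟨j, hx1, hx2, hy1⟩ := (H.mem_region_iff_top hy).1 h
    exact H.mem_region_of_top j hx1 hx2 h2 (h1.trans hy1)
  · have : y' = y := le_antisymm (hy ▸ h1) (hy ▸ h2)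
    rwa [this]

lemma region_x_bounds {x y : ℝ} (h : (x, y) ∈ H.region) :
    H.xs 0 ≤ x ∧ x ≤ H.xs (Fin.last H.m) := by
  rcases h with hv | hv
  · obtain ⟨i, ⟨hx1, hx2⟩, -⟩ := Set.mem_iUnion.1 hv
    exact ⟨(H.xs_mono.monotone (Fin.zero_le _)).trans hx1,
      hx2.trans (H.xs_mono.monotone (Fin.le_last _))⟩
  · obtain ⟨j, ⟨hx1, hx2⟩, -⟩ := Set.mem_iUnion.1 hv
    refine ⟨?_, ?_⟩
    · rw [← H.left_eq]
      exact (H.ys_mono.monotone (Fin.zero_le _)).trans hx1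
    · rw [← H.right_eq]
      exact hx2.trans (H.ys_mono.monotone (Fin.le_last _))


lemma exists_col_bot {x : ℝ} (h1 : H.xs 0 ≤ x) (h2 : x ≤ H.xs (Fin.last H.m)) :
    ∃ i : Fin H.m, H.xs i.castSucc ≤ x ∧ x ≤ H.xs i.succ := by
  obtain ⟨i0, hi0, hmax⟩ := Set.exists_max_image {i : Fin (H.m + 1) | H.xs i ≤ x} id
    (Set.toFinite _) ⟨0, h1⟩
  by_cases hlast : (i0 : ℕ) = H.m
  · have hx : x = H.xs (Fin.last H.m) := by
      refine le_antisymm h2 ?_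
      have : i0 = Fin.last H.m := Fin.ext hlast
      exact this ▸ hi0
    have hm1 : H.m - 1 < H.m := Nat.sub_lt H.hm Nat.one_pos
    refine ⟨⟨H.m - 1, hm1⟩, ?_, ?_⟩
    · rw [hx]
      refine H.xs_mono.monotone ?_
      rw [Fin.le_def, Fin.coe_castSucc, Fin.val_last]
      show H.m - 1 ≤ H.m
      omega
    · rw [hx]
      refine H.xs_mono.monotone ?_
      rw [Fin.le_def, Fin.val_succ, Fin.val_last]
      show H.m ≤ H.m - 1 + 1
      omega
  · have hlt : (i0 : ℕ) < H.m := by have := i0.isLt; omega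
    refine ⟨⟨(i0 : ℕ), hlt⟩, ?_, ?_⟩
    · have : (⟨(i0 : ℕ), hlt⟩ : Fin H.m).castSucc = i0 := by
        apply Fin.ext; simp
      rw [this]; exact hi0
    · by_contra hcon
      push_neg at hcon
      have hmem : (⟨(i0 : ℕ), hlt⟩ : Fin H.m).succ ∈ {i : Fin (H.m + 1) | H.xs i ≤ x} :=
        hcon.le
      have := hmax _ hmem
      simp only [id] at this
      rw [Fin.le_def] at this
      have h2' : (i0 : ℕ) + 1 ≤ (i0 : ℕ) := this
      omega

lemma exists_col_top {x : ℝ} (h1 : H.ys 0 ≤ x) (h2 : x ≤ H.ys (Fin.last H.n)) :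
    ∃ j : Fin H.n, H.ys j.castSucc ≤ x ∧ x ≤ H.ys j.succ := by
  obtain ⟨i0, hi0, hmax⟩ := Set.exists_max_image {i : Fin (H.n + 1) | H.ys i ≤ x} id
    (Set.toFinite _) ⟨0, h1⟩
  by_cases hlast : (i0 : ℕ) = H.n
  · have hx : x = H.ys (Fin.last H.n) := by
      refine le_antisymm h2 ?_
      have : i0 = Fin.last H.n := Fin.ext hlast
      exact this ▸ hi0
    have hm1 : H.n - 1 < H.n := Nat.sub_lt H.hn Nat.one_pos
    refine ⟨⟨H.n - 1, hm1⟩, ?_, ?_⟩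
    · rw [hx]
      refine H.ys_mono.monotone ?_
      rw [Fin.le_def, Fin.coe_castSucc, Fin.val_last]
      show H.n - 1 ≤ H.n
      omega
    · rw [hx]
      refine H.ys_mono.monotone ?_
      rw [Fin.le_def, Fin.val_succ, Fin.val_last]
      show H.n ≤ H.n - 1 + 1
      omega
  · have hlt : (i0 : ℕ) < H.n := by have := i0.isLt; omega
    refine ⟨⟨(i0 : ℕ), hlt⟩, ?_, ?_⟩
    · have : (⟨(i0 : ℕ), hlt⟩ : Fin H.n).castSucc = i0 := by
        apply Fin.ext; simp
      rw [this]; exact hi0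
    · by_contra hcon
      push_neg at hcon
      have hmem : (⟨(i0 : ℕ), hlt⟩ : Fin H.n).succ ∈ {i : Fin (H.n + 1) | H.ys i ≤ x} :=
        hcon.le
      have := hmax _ hmem
      simp only [id] at this
      rw [Fin.le_def] at this
      have h2' : (i0 : ℕ) + 1 ≤ (i0 : ℕ) := this
      omega

lemma col_unique_bot {c : ℝ} {i j : Fin H.m} (h1 : H.xs i.castSucc < c)
    (h2 : c < H.xs i.succ) (h3 : H.xs j.castSucc ≤ c) (h4 : c ≤ H.xs j.succ) :
    j = i := by
  by_contra hne
  rcases lt_or_gt_of_ne hne with hji | hij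
  · have hv := Fin.lt_def.mp hji
    have hle : j.succ ≤ i.castSucc := by
      rw [Fin.le_def, Fin.val_succ, Fin.coe_castSucc]; omega
    exact absurd ((h4.trans (H.xs_mono.monotone hle)).trans_lt h1) (lt_irrefl c)
  · have hv : (i : ℕ) < (j : ℕ) := Fin.lt_def.mp hij
    have hle : i.succ ≤ j.castSucc := by
      rw [Fin.le_def, Fin.val_succ, Fin.coe_castSucc]; omega
    exact absurd ((h2.trans_le (H.xs_mono.monotone hle)).trans_le h3) (lt_irrefl c)

lemma col_unique_top {c : ℝ} {i j : Fin H.n} (h1 : H.ys i.castSucc < c)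
    (h2 : c < H.ys i.succ) (h3 : H.ys j.castSucc ≤ c) (h4 : c ≤ H.ys j.succ) :
    j = i := by
  by_contra hne
  rcases lt_or_gt_of_ne hne with hji | hij
  · have hv := Fin.lt_def.mp hji
    have hle : j.succ ≤ i.castSucc := by
      rw [Fin.le_def, Fin.val_succ, Fin.coe_castSucc]; omega
    exact absurd ((h4.trans (H.ys_mono.monotone hle)).trans_lt h1) (lt_irrefl c)
  · have hv : (i : ℕ) < (j : ℕ) := Fin.lt_def.mp hij
    have hle : i.succ ≤ j.castSucc := by
      rw [Fin.le_def, Fin.val_succ, Fin.coe_castSucc]; omega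
    exact absurd ((h2.trans_le (H.ys_mono.monotone hle)).trans_le h3) (lt_irrefl c)

/-! ### Horizontal rays -/

lemma rhitSet_bddAbove (v : ℝ × ℝ) :
    BddAbove {x | v.1 ≤ x ∧ Icc v.1 x ×ˢ ({v.2} : Set ℝ) ⊆ H.region} := by
  refine ⟨H.xs (Fin.last H.m), fun x hx => ?_⟩
  have : (x, v.2) ∈ H.region := hx.2 (Set.mk_mem_prod ⟨hx.1, le_rfl⟩ rfl)
  exact (H.region_x_bounds this).2

lemma lhitSet_bddBelow (v : ℝ × ℝ) :
    BddBelow {x | x ≤ v.1 ∧ Icc x v.1 ×ˢ ({v.2} : Set ℝ) ⊆ H.region} := by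
  refine ⟨H.xs 0, fun x hx => ?_⟩
  have : (x, v.2) ∈ H.region := hx.2 (Set.mk_mem_prod ⟨le_rfl, hx.1⟩ rfl)
  exact (H.region_x_bounds this).1

lemma le_rhit {v : ℝ × ℝ} {x : ℝ} (hx : v.1 ≤ x)
    (hseg : Icc v.1 x ×ˢ ({v.2} : Set ℝ) ⊆ H.region) : x ≤ H.rhit v :=
  le_csSup (H.rhitSet_bddAbove v) ⟨hx, hseg⟩

lemma lhit_le {v : ℝ × ℝ} {x : ℝ} (hx : x ≤ v.1)
    (hseg : Icc x v.1 ×ˢ ({v.2} : Set ℝ) ⊆ H.region) : H.lhit v ≤ x :=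
  csInf_le (H.lhitSet_bddBelow v) ⟨hx, hseg⟩

lemma rhit_spec {v : ℝ × ℝ} (hv : v ∈ H.region) :
    v.1 ≤ H.rhit v ∧ Icc v.1 (H.rhit v) ×ˢ ({v.2} : Set ℝ) ⊆ H.region := by
  have hv' : ((v.1, v.2) : ℝ × ℝ) ∈ H.region := by rwa [Prod.mk.eta]
  have hvS : v.1 ∈ {x | v.1 ≤ x ∧ Icc v.1 x ×ˢ ({v.2} : Set ℝ) ⊆ H.region} := by
    refine ⟨le_rfl, ?_⟩
    rintro ⟨a, b⟩ ⟨ha, hb⟩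
    simp only [Set.mem_singleton_iff] at hb
    have : a = v.1 := le_antisymm ha.2 ha.1
    rw [this, hb]; exact hv'
  have h1 : v.1 ≤ H.rhit v := le_csSup (H.rhitSet_bddAbove v) hvS
  refine ⟨h1, ?_⟩
  rintro ⟨a, b⟩ ⟨ha, hb⟩
  simp only [Set.mem_singleton_iff] at hb
  subst hb
  rcases eq_or_lt_of_le ha.2 with heq | hlt
  · have hcl : IsClosed {x : ℝ | (x, v.2) ∈ H.region} :=
      H.region_closed.preimage (continuous_id.prodMk continuous_const)
    have hsub : {x | v.1 ≤ x ∧ Icc v.1 x ×ˢ ({v.2} : Set ℝ) ⊆ H.region} ⊆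
        {x : ℝ | (x, v.2) ∈ H.region} :=
      fun x hx => hx.2 (Set.mk_mem_prod ⟨hx.1, le_rfl⟩ rfl)
    have hmem : H.rhit v ∈ closure {x : ℝ | (x, v.2) ∈ H.region} :=
      closure_mono hsub (csSup_mem_closure ⟨_, hvS⟩ (H.rhitSet_bddAbove v))
    rw [hcl.closure_eq] at hmem
    have ha2 : a = H.rhit v := heq
    exact ha2 ▸ hmem
  · obtain ⟨x', hx'S, hx'⟩ := exists_lt_of_lt_csSup ⟨_, hvS⟩ hlt
    exact hx'S.2 (Set.mk_mem_prod ⟨ha.1, hx'.le⟩ rfl)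

lemma lhit_spec {v : ℝ × ℝ} (hv : v ∈ H.region) :
    H.lhit v ≤ v.1 ∧ Icc (H.lhit v) v.1 ×ˢ ({v.2} : Set ℝ) ⊆ H.region := by
  have hv' : ((v.1, v.2) : ℝ × ℝ) ∈ H.region := by rwa [Prod.mk.eta]
  have hvS : v.1 ∈ {x | x ≤ v.1 ∧ Icc x v.1 ×ˢ ({v.2} : Set ℝ) ⊆ H.region} := by
    refine ⟨le_rfl, ?_⟩
    rintro ⟨a, b⟩ ⟨ha, hb⟩
    simp only [Set.mem_singleton_iff] at hb
    have : a = v.1 := le_antisymm ha.2 ha.1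
    rw [this, hb]; exact hv'
  have h1 : H.lhit v ≤ v.1 := csInf_le (H.lhitSet_bddBelow v) hvS
  refine ⟨h1, ?_⟩
  rintro ⟨a, b⟩ ⟨ha, hb⟩
  simp only [Set.mem_singleton_iff] at hb
  subst hb
  rcases eq_or_lt_of_le ha.1 with heq | hlt
  · have hcl : IsClosed {x : ℝ | (x, v.2) ∈ H.region} :=
      H.region_closed.preimage (continuous_id.prodMk continuous_const)
    have hsub : {x | x ≤ v.1 ∧ Icc x v.1 ×ˢ ({v.2} : Set ℝ) ⊆ H.region} ⊆
        {x : ℝ | (x, v.2) ∈ H.region} :=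
      fun x hx => hx.2 (Set.mk_mem_prod ⟨le_rfl, hx.1⟩ rfl)
    have hmem : H.lhit v ∈ closure {x : ℝ | (x, v.2) ∈ H.region} :=
      closure_mono hsub (csInf_mem_closure ⟨_, hvS⟩ (H.lhitSet_bddBelow v))
    rw [hcl.closure_eq] at hmem
    have ha2 : H.lhit v = a := heq
    exact ha2 ▸ hmem
  · obtain ⟨x', hx'S, hx'⟩ := exists_lt_of_csInf_lt ⟨_, hvS⟩ hlt
    exact hx'S.2 (Set.mk_mem_prod ⟨hx'.le, ha.2⟩ rfl)

lemma rpt_fst (v : ℝ × ℝ) : (H.rpt v).1 = H.rhit v := by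
  unfold rpt; split_ifs with h <;> simp [h]

lemma lpt_fst (v : ℝ × ℝ) : (H.lpt v).1 = H.lhit v := by
  unfold lpt; split_ifs with h <;> simp [h]

lemma mem_Iv {u v : ℝ × ℝ} :
    u ∈ H.Iv v ↔ u ∈ H.verts ∧ H.lhit v ≤ u.1 ∧ u.1 ≤ H.rhit v := by
  unfold Iv ivl
  rw [Set.mem_setOf_eq, H.lpt_fst, H.rpt_fst]

lemma Iv_subset_verts (v : ℝ × ℝ) : H.Iv v ⊆ H.verts := fun _ hu => (H.mem_Iv.1 hu).1

lemma self_mem_Iv {v : ℝ × ℝ} (hv : v ∈ H.verts) : v ∈ H.Iv v :=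
  H.mem_Iv.2 ⟨hv, (H.lhit_spec (H.verts_subset_region hv)).1,
    (H.rhit_spec (H.verts_subset_region hv)).1⟩

lemma covisible_self {v : ℝ × ℝ} (hv : v ∈ H.region) : H.covisible v v := by
  unfold covisible
  rintro ⟨a, b⟩ ⟨ha, hb⟩
  simp only [min_self, max_self, Set.mem_Icc] at ha hb
  have h1 : a = v.1 := le_antisymm ha.2 ha.1
  have h2 : b = v.2 := le_antisymm hb.2 hb.1
  rw [h1, h2, Prod.mk.eta]; exact hv

lemma covisible_mem {u t : ℝ × ℝ} (h : H.covisible u t) {x y : ℝ}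
    (hx1 : min u.1 t.1 ≤ x) (hx2 : x ≤ max u.1 t.1)
    (hy1 : min u.2 t.2 ≤ y) (hy2 : y ≤ max u.2 t.2) : (x, y) ∈ H.region :=
  h (Set.mk_mem_prod ⟨hx1, hx2⟩ ⟨hy1, hy2⟩)


/-! ### `leftmostLowest` -/

lemma leftmostLowest_spec {S : Set (ℝ × ℝ)} (hfin : S.Finite) (hne : S.Nonempty) :
    leftmostLowest S ∈ S ∧ ∀ q ∈ S, |(leftmostLowest S).2| ≤ |q.2| := by
  set X : Set ℝ := {x | ∃ y, (x, y) ∈ S ∧ ∀ q ∈ S, |y| ≤ |q.2|} with hX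
  obtain ⟨p0, hp0, hp0min⟩ := Set.exists_min_image S (fun q => |q.2|) hfin hne
  have hXne : X.Nonempty := ⟨p0.1, p0.2, by rwa [Prod.mk.eta], hp0min⟩
  have hXfin : X.Finite := by
    refine (hfin.image Prod.fst).subset ?_
    rintro x ⟨y, hy, -⟩
    exact ⟨(x, y), hy, rfl⟩
  have hnx : sInf X ∈ X := hXne.csInf_mem hXfin
  obtain ⟨y1, hy1S, hy1min⟩ := hnx
  set A : Set ℝ := {y | (sInf X, y) ∈ S} with hA
  have hAne : A.Nonempty := ⟨y1, hy1S⟩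
  have hAfin : A.Finite := by
    refine (hfin.image Prod.snd).subset ?_
    intro y hy
    exact ⟨(sInf X, y), hy, rfl⟩
  set M : Set ℝ := {y | y ∈ A ∧ ∀ y' ∈ A, |y| ≤ |y'|} with hM
  have hMne : M.Nonempty := by
    obtain ⟨y0, hy0, hy0min⟩ := Set.exists_min_image A (fun y => |y|) hAfin hAne
    exact ⟨y0, hy0, hy0min⟩
  have hMfin : M.Finite := hAfin.subset fun y hy => hy.1
  have hyc : closestToBase A ∈ M := by
    unfold closestToBase
    exact hMne.csSup_mem hMfin
  have hS : leftmostLowest S = (sInf X, closestToBase A) := rfl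
  rw [hS]
  refine ⟨hyc.1, fun q hq => ?_⟩
  exact le_trans (hyc.2 y1 hy1S) (hy1min q hq)

/-! ### The core geometric lemma -/

lemma core_bot {L R : ℝ} {b : ℝ × ℝ} {w : ℝ × ℝ}
    (hbv : b ∈ H.verts) (hbL : L ≤ b.1) (hbR : b.1 ≤ R) (hbneg : b.2 < 0)
    (hw : w ∈ H.region) (hwL : L ≤ w.1) (hwR : w.1 ≤ R)
    (hmin : ∀ v ∈ H.verts, L ≤ v.1 → v.1 ≤ R → v.2 < 0 → v.2 ≤ b.2) :
    Icc (min b.1 w.1) (max b.1 w.1) ×ˢ ({b.2} : Set ℝ) ⊆ H.region := by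
  have hbreg : ((b.1, b.2) : ℝ × ℝ) ∈ H.region := by
    rw [Prod.mk.eta]; exact H.verts_subset_region hbv
  have hwreg : ((w.1, w.2) : ℝ × ℝ) ∈ H.region := by rwa [Prod.mk.eta]
  rintro ⟨x, y⟩ ⟨hx, hy⟩
  simp only [Set.mem_singleton_iff] at hy
  subst hy
  simp only [Set.mem_Icc] at hx
  have hxlo : H.xs 0 ≤ x := by
    refine le_trans ?_ hx.1
    exact le_min (H.region_x_bounds hbreg).1 (H.region_x_bounds hwreg).1
  have hxhi : x ≤ H.xs (Fin.last H.m) := by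
    refine le_trans hx.2 ?_
    exact max_le (H.region_x_bounds hbreg).2 (H.region_x_bounds hwreg).2
  obtain ⟨i, hi1, hi2⟩ := H.exists_col_bot hxlo hxhi
  by_cases hdi : H.d i ≤ b.2
  · exact H.mem_region_of_bot i hi1 hi2 hdi hbneg.le
  push_neg at hdi
  exfalso
  have hLA : L ≤ min b.1 w.1 := le_min hbL hwL
  have hBR : max b.1 w.1 ≤ R := max_le hbR hwR
  rcases le_or_gt (min b.1 w.1) (H.xs i.castSucc) with h1 | h1
  · have := hmin (H.xs i.castSucc, H.d i) (H.botL_mem i) (hLA.trans h1)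
      ((hi1.trans hx.2).trans hBR) (H.d_neg i)
    exact absurd this (not_le.2 hdi)
  rcases le_or_gt (H.xs i.succ) (max b.1 w.1) with h2 | h2
  · have := hmin (H.xs i.succ, H.d i) (H.botR_mem i) (hLA.trans (hx.1.trans hi2))
      (h2.trans hBR) (H.d_neg i)
    exact absurd this (not_le.2 hdi)
  · obtain ⟨j, hj1, hj2, hj3⟩ := (H.mem_region_iff_bot hbneg).1 hbreg
    have hji : j = i := by
      refine H.col_unique_bot ?_ ?_ hj1 hj2
      · exact h1.trans_le (min_le_left _ _)
      · exact (le_max_left b.1 w.1).trans_lt h2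
    rw [hji] at hj3
    exact absurd hj3 (not_le.2 hdi)

lemma core_top {L R : ℝ} {b : ℝ × ℝ} {w : ℝ × ℝ}
    (hbv : b ∈ H.verts) (hbL : L ≤ b.1) (hbR : b.1 ≤ R) (hbpos : 0 < b.2)
    (hw : w ∈ H.region) (hwL : L ≤ w.1) (hwR : w.1 ≤ R)
    (hmin : ∀ v ∈ H.verts, L ≤ v.1 → v.1 ≤ R → 0 < v.2 → b.2 ≤ v.2) :
    Icc (min b.1 w.1) (max b.1 w.1) ×ˢ ({b.2} : Set ℝ) ⊆ H.region := by
  have hbreg : ((b.1, b.2) : ℝ × ℝ) ∈ H.region := by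
    rw [Prod.mk.eta]; exact H.verts_subset_region hbv
  have hwreg : ((w.1, w.2) : ℝ × ℝ) ∈ H.region := by rwa [Prod.mk.eta]
  rintro ⟨x, y⟩ ⟨hx, hy⟩
  simp only [Set.mem_singleton_iff] at hy
  subst hy
  simp only [Set.mem_Icc] at hx
  have hxlo : H.ys 0 ≤ x := by
    rw [H.left_eq]
    refine le_trans ?_ hx.1
    exact le_min (H.region_x_bounds hbreg).1 (H.region_x_bounds hwreg).1
  have hxhi : x ≤ H.ys (Fin.last H.n) := by
    rw [H.right_eq]
    refine le_trans hx.2 ?_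
    exact max_le (H.region_x_bounds hbreg).2 (H.region_x_bounds hwreg).2
  obtain ⟨j, hj1, hj2⟩ := H.exists_col_top hxlo hxhi
  by_cases hdj : b.2 ≤ H.h j
  · exact H.mem_region_of_top j hj1 hj2 hbpos.le hdj
  push_neg at hdj
  exfalso
  have hLA : L ≤ min b.1 w.1 := le_min hbL hwL
  have hBR : max b.1 w.1 ≤ R := max_le hbR hwR
  rcases le_or_gt (min b.1 w.1) (H.ys j.castSucc) with h1 | h1
  · have := hmin (H.ys j.castSucc, H.h j) (H.topL_mem j) (hLA.trans h1)
      ((hj1.trans hx.2).trans hBR) (H.h_pos j)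
    exact absurd this (not_le.2 hdj)
  rcases le_or_gt (H.ys j.succ) (max b.1 w.1) with h2 | h2
  · have := hmin (H.ys j.succ, H.h j) (H.topR_mem j) (hLA.trans (hx.1.trans hj2))
      (h2.trans hBR) (H.h_pos j)
    exact absurd this (not_le.2 hdj)
  · obtain ⟨j', hj1', hj2', hj3'⟩ := (H.mem_region_iff_top hbpos).1 hbreg
    have hji : j' = j := by
      refine H.col_unique_top ?_ ?_ hj1' hj2'
      · exact h1.trans_le (min_le_left _ _)
      · exact (le_max_left b.1 w.1).trans_lt h2
    rw [hji] at hj3'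
    exact absurd hj3' (not_le.2 hdj)


/-! ### Unfolding lemmas for `Ipow` and `bdtd` -/

lemma Ipow_zero (s : ℝ × ℝ) : H.Ipow s 0 = {s} := rfl

lemma Ipow_succ (s : ℝ × ℝ) (k : ℕ) :
    H.Ipow s (k + 1) = H.Iv (H.bdtd s k).1 ∪ H.Iv (H.bdtd s k).2 := rfl

lemma bdtd_zero (s : ℝ × ℝ) : H.bdtd s 0 = (s, s) := rfl

lemma bdtd_succ (s : ℝ × ℝ) (k : ℕ) :
    H.bdtd s (k + 1) =
      (if {v | v ∈ H.Ipow s (k + 1) ∧ v.2 < 0} = ∅ then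
        (leftmostLowest {v | v ∈ H.Ipow s (k + 1) ∧ 0 < v.2},
          leftmostLowest {v | v ∈ H.Ipow s (k + 1) ∧ 0 < v.2})
      else if {v | v ∈ H.Ipow s (k + 1) ∧ 0 < v.2} = ∅ then
        (leftmostLowest {v | v ∈ H.Ipow s (k + 1) ∧ v.2 < 0},
          leftmostLowest {v | v ∈ H.Ipow s (k + 1) ∧ v.2 < 0})
      else (leftmostLowest {v | v ∈ H.Ipow s (k + 1) ∧ v.2 < 0},
          leftmostLowest {v | v ∈ H.Ipow s (k + 1) ∧ 0 < v.2})) := rfl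

/-- The inductive invariant about the dominators `bd^k(s)` and `td^k(s)`. -/
def GoodAt (s : ℝ × ℝ) (k : ℕ) : Prop :=
  (H.bdtd s k).1 ∈ H.Ipow s k ∧ (H.bdtd s k).2 ∈ H.Ipow s k ∧
  H.Ipow s k ⊆ H.verts ∧
  (∀ v ∈ H.Ipow s k, v.2 < 0 → (H.bdtd s k).1.2 < 0 ∧ v.2 ≤ (H.bdtd s k).1.2) ∧
  (∀ v ∈ H.Ipow s k, 0 < v.2 → 0 < (H.bdtd s k).2.2 ∧ (H.bdtd s k).2.2 ≤ v.2) ∧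
  (H.Ipow s k = {s} ∨
    ∃ L R : ℝ, H.Ipow s k = {v | v ∈ H.verts ∧ L ≤ v.1 ∧ v.1 ≤ R}) ∧
  ((H.bdtd s k).1 = (H.bdtd s k).2 ∨
    ((H.bdtd s k).1.2 < 0 ∧ 0 < (H.bdtd s k).2.2))

lemma goodAt_zero {s : ℝ × ℝ} (hs : s ∈ H.verts) : H.GoodAt s 0 := by
  refine ⟨rfl, rfl, Set.singleton_subset_iff.2 hs, ?_, ?_, Or.inl rfl, Or.inl rfl⟩
  · intro v hv hneg
    rw [H.Ipow_zero, Set.mem_singleton_iff] at hv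
    subst hv
    exact ⟨hneg, le_rfl⟩
  · intro v hv hpos
    rw [H.Ipow_zero, Set.mem_singleton_iff] at hv
    subst hv
    exact ⟨hpos, le_rfl⟩

lemma goodAt_succ {s : ℝ × ℝ} (hs : s ∈ H.verts) {k : ℕ} (hg : H.GoodAt s k) :
    H.GoodAt s (k + 1) := by
  obtain ⟨hb, hτ, hIsub, hmb, hmτ, hint, hsgn⟩ := hg
  have hbv : (H.bdtd s k).1 ∈ H.verts := hIsub hb
  have htv : (H.bdtd s k).2 ∈ H.verts := hIsub hτ
  have hbreg := H.verts_subset_region hbv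
  have htreg := H.verts_subset_region htv
  have hI'sub : H.Ipow s (k + 1) ⊆ H.verts := by
    rw [H.Ipow_succ]
    exact Set.union_subset (H.Iv_subset_verts _) (H.Iv_subset_verts _)
  have hI'ne : (H.Ipow s (k + 1)).Nonempty :=
    ⟨(H.bdtd s k).1, by rw [H.Ipow_succ]; exact Or.inl (H.self_mem_Iv hbv)⟩
  have hI'fin : (H.Ipow s (k + 1)).Finite := H.verts_finite.subset hI'sub
  -- the new interval form
  have hform : ∃ L R : ℝ,
      H.Ipow s (k + 1) = {v | v ∈ H.verts ∧ L ≤ v.1 ∧ v.1 ≤ R} := by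
    rcases eq_or_ne (H.bdtd s k).1 (H.bdtd s k).2 with hbt | hbt
    · refine ⟨H.lhit (H.bdtd s k).1, H.rhit (H.bdtd s k).1, ?_⟩
      rw [H.Ipow_succ, ← hbt, Set.union_self]
      ext u
      rw [H.mem_Iv]
      exact Iff.rfl
    · have hsg : (H.bdtd s k).1.2 < 0 ∧ 0 < (H.bdtd s k).2.2 := hsgn.resolve_left hbt
      rcases hint with h0 | ⟨L, R, hI⟩
      · exfalso
        rw [h0, Set.mem_singleton_iff] at hb hτ
        exact hbt (hb.trans hτ.symm)
      · rw [hI] at hb hτ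
        have hmin : ∀ v ∈ H.verts, L ≤ v.1 → v.1 ≤ R → v.2 < 0 →
            v.2 ≤ (H.bdtd s k).1.2 := by
          intro v hv h1 h2 h3
          exact (hmb v (by rw [hI]; exact ⟨hv, h1, h2⟩) h3).2
        have hseg := H.core_bot hbv hb.2.1 hb.2.2 hsg.1 htreg hτ.2.1 hτ.2.2 hmin
        have hτin : H.lhit (H.bdtd s k).1 ≤ (H.bdtd s k).2.1 ∧
            (H.bdtd s k).2.1 ≤ H.rhit (H.bdtd s k).1 := by
          rcases le_total (H.bdtd s k).1.1 (H.bdtd s k).2.1 with hle | hle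
          · rw [min_eq_left hle, max_eq_right hle] at hseg
            exact ⟨(H.lhit_spec hbreg).1.trans hle, H.le_rhit hle hseg⟩
          · rw [min_eq_right hle, max_eq_left hle] at hseg
            exact ⟨H.lhit_le hle hseg, hle.trans (H.rhit_spec hbreg).1⟩
        have hτreg' : H.lhit (H.bdtd s k).2 ≤ (H.bdtd s k).2.1 :=
          (H.lhit_spec htreg).1
        have hτreg'' : (H.bdtd s k).2.1 ≤ H.rhit (H.bdtd s k).2 :=
          (H.rhit_spec htreg).1
        refine ⟨min (H.lhit (H.bdtd s k).1) (H.lhit (H.bdtd s k).2),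
          max (H.rhit (H.bdtd s k).1) (H.rhit (H.bdtd s k).2), ?_⟩
        ext u
        constructor
        · intro hu
          rw [H.Ipow_succ] at hu
          rcases hu with hu | hu <;> rw [H.mem_Iv] at hu
          · exact ⟨hu.1, (min_le_left _ _).trans hu.2.1,
              hu.2.2.trans (le_max_left _ _)⟩
          · exact ⟨hu.1, (min_le_right _ _).trans hu.2.1,
              hu.2.2.trans (le_max_right _ _)⟩
        · rintro ⟨huv, h1, h2⟩
          rw [H.Ipow_succ]
          by_cases hc1 : H.lhit (H.bdtd s k).1 ≤ u.1 ∧ u.1 ≤ H.rhit (H.bdtd s k).1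
          · exact Or.inl (H.mem_Iv.2 ⟨huv, hc1.1, hc1.2⟩)
          · right
            rw [H.mem_Iv]
            rcases le_or_gt (H.lhit (H.bdtd s k).1) u.1 with hl | hl
            · have hr : ¬ u.1 ≤ H.rhit (H.bdtd s k).1 := fun hr => hc1 ⟨hl, hr⟩
              push_neg at hr
              refine ⟨huv, hτreg'.trans (hτin.2.trans hr.le), ?_⟩
              rcases le_max_iff.1 h2 with hm | hm
              · exact absurd hm (not_le.2 hr)
              · exact hm
            · refine ⟨huv, ?_, ?_⟩
              · rcases min_le_iff.1 h1 with hm | hm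
                · exact absurd hm (not_le.2 hl)
                · exact hm
              · exact (hl.le.trans hτin.1).trans hτreg''
  obtain ⟨L', R', hI'⟩ := hform
  -- now analyse the new dominators
  have hsplit : ∀ v ∈ H.Ipow s (k + 1),
      v ∈ {v | v ∈ H.Ipow s (k + 1) ∧ v.2 < 0} ∨
      v ∈ {v | v ∈ H.Ipow s (k + 1) ∧ 0 < v.2} := by
    intro v hv
    rcases lt_trichotomy v.2 0 with h | h | h
    · exact Or.inl ⟨hv, h⟩
    · exact absurd h (H.verts_snd_ne (hI'sub hv))
    · exact Or.inr ⟨hv, h⟩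
  have hJmfin : {v | v ∈ H.Ipow s (k + 1) ∧ v.2 < 0}.Finite :=
    hI'fin.subset fun v hv => hv.1
  have hJpfin : {v | v ∈ H.Ipow s (k + 1) ∧ 0 < v.2}.Finite :=
    hI'fin.subset fun v hv => hv.1
  by_cases hm0 : {v | v ∈ H.Ipow s (k + 1) ∧ v.2 < 0} = ∅
  · have hrw : H.bdtd s (k + 1) =
        (leftmostLowest {v | v ∈ H.Ipow s (k + 1) ∧ 0 < v.2},
          leftmostLowest {v | v ∈ H.Ipow s (k + 1) ∧ 0 < v.2}) := by
      rw [H.bdtd_succ, if_pos hm0]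
    have hpne : {v | v ∈ H.Ipow s (k + 1) ∧ 0 < v.2}.Nonempty := by
      obtain ⟨u, hu⟩ := hI'ne
      rcases hsplit u hu with h | h
      · rw [hm0] at h; exact absurd h (Set.notMem_empty u)
      · exact ⟨u, h⟩
    obtain ⟨hgm, hgmin⟩ := leftmostLowest_spec hJpfin hpne
    simp only [Set.mem_setOf_eq] at hgm
    unfold GoodAt
    rw [hrw]
    refine ⟨hgm.1, hgm.1, hI'sub, ?_, ?_, Or.inr ⟨L', R', hI'⟩, Or.inl rfl⟩
    · intro v hv hneg
      have : v ∈ ({} : Set (ℝ × ℝ)) := hm0 ▸ (⟨hv, hneg⟩ :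
        v ∈ {v | v ∈ H.Ipow s (k + 1) ∧ v.2 < 0})
      exact absurd this (Set.notMem_empty v)
    · intro v hv hpos
      have := hgmin v ⟨hv, hpos⟩
      rw [abs_of_pos hgm.2, abs_of_pos hpos] at this
      exact ⟨hgm.2, this⟩
  · by_cases hp0 : {v | v ∈ H.Ipow s (k + 1) ∧ 0 < v.2} = ∅
    · have hrw : H.bdtd s (k + 1) =
          (leftmostLowest {v | v ∈ H.Ipow s (k + 1) ∧ v.2 < 0},
            leftmostLowest {v | v ∈ H.Ipow s (k + 1) ∧ v.2 < 0}) := by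
        rw [H.bdtd_succ, if_neg hm0, if_pos hp0]
      have hmne : {v | v ∈ H.Ipow s (k + 1) ∧ v.2 < 0}.Nonempty :=
        Set.nonempty_iff_ne_empty.2 hm0
      obtain ⟨hgm, hgmin⟩ := leftmostLowest_spec hJmfin hmne
      simp only [Set.mem_setOf_eq] at hgm
      unfold GoodAt
      rw [hrw]
      refine ⟨hgm.1, hgm.1, hI'sub, ?_, ?_, Or.inr ⟨L', R', hI'⟩, Or.inl rfl⟩
      · intro v hv hneg
        have := hgmin v ⟨hv, hneg⟩
        rw [abs_of_neg hgm.2, abs_of_neg hneg] at this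
        exact ⟨hgm.2, by linarith⟩
      · intro v hv hpos
        have : v ∈ ({} : Set (ℝ × ℝ)) := hp0 ▸ (⟨hv, hpos⟩ :
          v ∈ {v | v ∈ H.Ipow s (k + 1) ∧ 0 < v.2})
        exact absurd this (Set.notMem_empty v)
    · have hrw : H.bdtd s (k + 1) =
          (leftmostLowest {v | v ∈ H.Ipow s (k + 1) ∧ v.2 < 0},
            leftmostLowest {v | v ∈ H.Ipow s (k + 1) ∧ 0 < v.2}) := by
        rw [H.bdtd_succ, if_neg hm0, if_neg hp0]
      have hmne : {v | v ∈ H.Ipow s (k + 1) ∧ v.2 < 0}.Nonempty :=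
        Set.nonempty_iff_ne_empty.2 hm0
      have hpne : {v | v ∈ H.Ipow s (k + 1) ∧ 0 < v.2}.Nonempty :=
        Set.nonempty_iff_ne_empty.2 hp0
      obtain ⟨hgm, hgmin⟩ := leftmostLowest_spec hJmfin hmne
      obtain ⟨hgp, hgpin⟩ := leftmostLowest_spec hJpfin hpne
      simp only [Set.mem_setOf_eq] at hgm hgp
      unfold GoodAt
      rw [hrw]
      refine ⟨hgm.1, hgp.1, hI'sub, ?_, ?_, Or.inr ⟨L', R', hI'⟩,
        Or.inr ⟨hgm.2, hgp.2⟩⟩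
      · intro v hv hneg
        have := hgmin v ⟨hv, hneg⟩
        rw [abs_of_neg hgm.2, abs_of_neg hneg] at this
        exact ⟨hgm.2, by linarith⟩
      · intro v hv hpos
        have := hgpin v ⟨hv, hpos⟩
        rw [abs_of_pos hgp.2, abs_of_pos hpos] at this
        exact ⟨hgp.2, this⟩


lemma cover {s : ℝ × ℝ} (hs : s ∈ H.verts) {k : ℕ} (hg : H.GoodAt s k)
    {u t : ℝ × ℝ} (hu : u ∈ H.Ipow s k) (ht : t ∈ H.verts)
    (hcov : H.covisible u t) : t ∈ H.Ipow s (k + 1) := by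
  have between_split : ∀ a b c x : ℝ, min a c ≤ x → x ≤ max a c →
      (min a b ≤ x ∧ x ≤ max a b) ∨ (min b c ≤ x ∧ x ≤ max b c) := by
    intro a b c x h1 h2
    rcases le_total x b with hxb | hbx
    · rcases min_le_iff.1 h1 with h | h
      · exact Or.inl ⟨(min_le_left a b).trans h, hxb.trans (le_max_right a b)⟩
      · exact Or.inr ⟨(min_le_right b c).trans h, hxb.trans (le_max_left b c)⟩
    · rcases le_max_iff.1 h2 with h | h
      · exact Or.inl ⟨(min_le_right a b).trans hbx, h.trans (le_max_left a b)⟩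
      · exact Or.inr ⟨(min_le_left b c).trans hbx, h.trans (le_max_right b c)⟩
  obtain ⟨hb, hτ, hIsub, hmb, hmτ, hint, -⟩ := hg
  have huv : u ∈ H.verts := hIsub hu
  have hureg : u ∈ H.region := H.verts_subset_region huv
  rcases lt_trichotomy u.2 0 with hneg | h0 | hpos
  · obtain ⟨hbneg, hub⟩ := hmb u hu hneg
    have hbv : (H.bdtd s k).1 ∈ H.verts := hIsub hb
    have hbreg : (H.bdtd s k).1 ∈ H.region := H.verts_subset_region hbv
    have hseg1 : Icc (min (H.bdtd s k).1.1 u.1) (max (H.bdtd s k).1.1 u.1) ×ˢ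
        ({(H.bdtd s k).1.2} : Set ℝ) ⊆ H.region := by
      rcases hint with h0' | ⟨L, R, hI⟩
      · have hbs : (H.bdtd s k).1 = s := by
          rw [h0', Set.mem_singleton_iff] at hb; exact hb
        have hus : u = (H.bdtd s k).1 := by
          rw [h0', Set.mem_singleton_iff] at hu; rw [hu]; exact hbs.symm
        rw [hus]
        rintro ⟨a, c⟩ ⟨ha, hc⟩
        simp only [min_self, max_self, Set.mem_Icc, Set.mem_singleton_iff] at ha hc
        have h1 : a = (H.bdtd s k).1.1 := le_antisymm ha.2 ha.1
        rw [h1, hc, Prod.mk.eta]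
        exact hbreg
      · rw [hI] at hb hu
        refine H.core_bot hbv hb.2.1 hb.2.2 hbneg hureg hu.2.1 hu.2.2 ?_
        intro v hv h1 h2 h3
        exact (hmb v (by rw [hI]; exact ⟨hv, h1, h2⟩) h3).2
    have hsegT : ∀ x : ℝ, min (H.bdtd s k).1.1 t.1 ≤ x →
        x ≤ max (H.bdtd s k).1.1 t.1 → (x, (H.bdtd s k).1.2) ∈ H.region := by
      intro x h1 h2
      rcases between_split (H.bdtd s k).1.1 u.1 t.1 x h1 h2 with ⟨ha1, ha2⟩ | ⟨ha1, ha2⟩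
      · exact hseg1 (Set.mk_mem_prod ⟨ha1, ha2⟩ rfl)
      · have hxu : (x, u.2) ∈ H.region :=
          H.covisible_mem hcov ha1 ha2 (min_le_left _ _) (le_max_left _ _)
        exact H.region_mono_bot hxu hub hbneg.le
    have hbound : H.lhit (H.bdtd s k).1 ≤ t.1 ∧ t.1 ≤ H.rhit (H.bdtd s k).1 := by
      rcases le_total (H.bdtd s k).1.1 t.1 with hle | hle
      · refine ⟨(H.lhit_spec hbreg).1.trans hle, H.le_rhit hle ?_⟩
        rintro ⟨a, c⟩ ⟨ha, hc⟩
        simp only [Set.mem_singleton_iff] at hc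
        subst hc
        exact hsegT a (by rw [min_eq_left hle]; exact ha.1)
          (by rw [max_eq_right hle]; exact ha.2)
      · refine ⟨H.lhit_le hle ?_, hle.trans (H.rhit_spec hbreg).1⟩
        rintro ⟨a, c⟩ ⟨ha, hc⟩
        simp only [Set.mem_singleton_iff] at hc
        subst hc
        exact hsegT a (by rw [min_eq_right hle]; exact ha.1)
          (by rw [max_eq_left hle]; exact ha.2)
    rw [H.Ipow_succ]
    exact Or.inl (H.mem_Iv.2 ⟨ht, hbound.1, hbound.2⟩)
  · exact absurd h0 (H.verts_snd_ne huv)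
  · obtain ⟨hτpos, huτ⟩ := hmτ u hu hpos
    have htv' : (H.bdtd s k).2 ∈ H.verts := hIsub hτ
    have htreg : (H.bdtd s k).2 ∈ H.region := H.verts_subset_region htv'
    have hseg1 : Icc (min (H.bdtd s k).2.1 u.1) (max (H.bdtd s k).2.1 u.1) ×ˢ
        ({(H.bdtd s k).2.2} : Set ℝ) ⊆ H.region := by
      rcases hint with h0' | ⟨L, R, hI⟩
      · have hbs : (H.bdtd s k).2 = s := by
          rw [h0', Set.mem_singleton_iff] at hτ; exact hτ
        have hus : u = (H.bdtd s k).2 := by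
          rw [h0', Set.mem_singleton_iff] at hu; rw [hu]; exact hbs.symm
        rw [hus]
        rintro ⟨a, c⟩ ⟨ha, hc⟩
        simp only [min_self, max_self, Set.mem_Icc, Set.mem_singleton_iff] at ha hc
        have h1 : a = (H.bdtd s k).2.1 := le_antisymm ha.2 ha.1
        rw [h1, hc, Prod.mk.eta]
        exact htreg
      · rw [hI] at hτ hu
        refine H.core_top htv' hτ.2.1 hτ.2.2 hτpos hureg hu.2.1 hu.2.2 ?_
        intro v hv h1 h2 h3
        exact (hmτ v (by rw [hI]; exact ⟨hv, h1, h2⟩) h3).2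
    have hsegT : ∀ x : ℝ, min (H.bdtd s k).2.1 t.1 ≤ x →
        x ≤ max (H.bdtd s k).2.1 t.1 → (x, (H.bdtd s k).2.2) ∈ H.region := by
      intro x h1 h2
      rcases between_split (H.bdtd s k).2.1 u.1 t.1 x h1 h2 with ⟨ha1, ha2⟩ | ⟨ha1, ha2⟩
      · exact hseg1 (Set.mk_mem_prod ⟨ha1, ha2⟩ rfl)
      · have hxu : (x, u.2) ∈ H.region :=
          H.covisible_mem hcov ha1 ha2 (min_le_left _ _) (le_max_left _ _)
        exact H.region_mono_top hxu huτ hτpos.le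
    have hbound : H.lhit (H.bdtd s k).2 ≤ t.1 ∧ t.1 ≤ H.rhit (H.bdtd s k).2 := by
      rcases le_total (H.bdtd s k).2.1 t.1 with hle | hle
      · refine ⟨(H.lhit_spec htreg).1.trans hle, H.le_rhit hle ?_⟩
        rintro ⟨a, c⟩ ⟨ha, hc⟩
        simp only [Set.mem_singleton_iff] at hc
        subst hc
        exact hsegT a (by rw [min_eq_left hle]; exact ha.1)
          (by rw [max_eq_right hle]; exact ha.2)
      · refine ⟨H.lhit_le hle ?_, hle.trans (H.rhit_spec htreg).1⟩
        rintro ⟨a, c⟩ ⟨ha, hc⟩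
        simp only [Set.mem_singleton_iff] at hc
        subst hc
        exact hsegT a (by rw [min_eq_right hle]; exact ha.1)
          (by rw [max_eq_left hle]; exact ha.2)
    rw [H.Ipow_succ]
    exact Or.inr (H.mem_Iv.2 ⟨ht, hbound.1, hbound.2⟩)

lemma goodAt {s : ℝ × ℝ} (hs : s ∈ H.verts) : ∀ k, H.GoodAt s k := by
  intro k
  induction k with
  | zero => exact H.goodAt_zero hs
  | succ k ih => exact H.goodAt_succ hs ih


/-! ### Connectivity of the visibility graph -/

lemma covis_horiz_bot (i : Fin H.m) :
    H.covisible (H.xs i.castSucc, H.d i) (H.xs i.succ, H.d i) := by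
  have hcs : H.xs i.castSucc ≤ H.xs i.succ :=
    H.xs_mono.monotone (Fin.castSucc_lt_succ).le
  rintro ⟨a, c⟩ ⟨ha, hc⟩
  simp only [min_self, max_self, Set.mem_Icc] at ha hc
  rw [min_eq_left hcs, max_eq_right hcs] at ha
  have hc' : c = H.d i := le_antisymm hc.2 hc.1
  exact H.mem_region_of_bot i ha.1 ha.2 hc'.ge (hc'.le.trans (H.d_neg i).le)

lemma covis_horiz_top (j : Fin H.n) :
    H.covisible (H.ys j.castSucc, H.h j) (H.ys j.succ, H.h j) := by
  have hcs : H.ys j.castSucc ≤ H.ys j.succ :=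
    H.ys_mono.monotone (Fin.castSucc_lt_succ).le
  rintro ⟨a, c⟩ ⟨ha, hc⟩
  simp only [min_self, max_self, Set.mem_Icc] at ha hc
  rw [min_eq_left hcs, max_eq_right hcs] at ha
  have hc' : c = H.h j := le_antisymm hc.2 hc.1
  exact H.mem_region_of_top j ha.1 ha.2 ((H.h_pos j).le.trans hc'.ge) hc'.le

lemma covis_vert_bot (i : ℕ) (h1 : i < H.m) (h2 : i + 1 < H.m) :
    H.covisible (H.xs (⟨i, h1⟩ : Fin H.m).succ, H.d ⟨i, h1⟩)
      (H.xs (⟨i + 1, h2⟩ : Fin H.m).castSucc, H.d ⟨i + 1, h2⟩) := by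
  have hxeq : (⟨i + 1, h2⟩ : Fin H.m).castSucc = (⟨i, h1⟩ : Fin H.m).succ := by
    apply Fin.ext; simp
  rintro ⟨a, c⟩ ⟨ha, hc⟩
  simp only [hxeq, min_self, max_self, Set.mem_Icc] at ha hc
  have ha' : a = H.xs (⟨i, h1⟩ : Fin H.m).succ := le_antisymm ha.2 ha.1
  have hc2 : c ≤ 0 := hc.2.trans (max_le (H.d_neg _).le (H.d_neg _).le)
  rcases le_or_gt (H.d ⟨i, h1⟩) c with hcl | hcl
  · refine H.mem_region_of_bot ⟨i, h1⟩ ?_ ?_ hcl hc2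
    · rw [ha']
      exact H.xs_mono.monotone (Fin.castSucc_lt_succ).le
    · rw [ha']
  · have hcl' : H.d ⟨i + 1, h2⟩ ≤ c := by
      rcases min_le_iff.1 hc.1 with h | h
      · exact absurd h (not_le.2 hcl)
      · exact h
    refine H.mem_region_of_bot ⟨i + 1, h2⟩ ?_ ?_ hcl' hc2
    · rw [ha', ← hxeq]
    · rw [ha', ← hxeq]
      exact H.xs_mono.monotone (Fin.castSucc_lt_succ).le

lemma covis_vert_top (j : ℕ) (h1 : j < H.n) (h2 : j + 1 < H.n) :
    H.covisible (H.ys (⟨j, h1⟩ : Fin H.n).succ, H.h ⟨j, h1⟩)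
      (H.ys (⟨j + 1, h2⟩ : Fin H.n).castSucc, H.h ⟨j + 1, h2⟩) := by
  have hxeq : (⟨j + 1, h2⟩ : Fin H.n).castSucc = (⟨j, h1⟩ : Fin H.n).succ := by
    apply Fin.ext; simp
  rintro ⟨a, c⟩ ⟨ha, hc⟩
  simp only [hxeq, min_self, max_self, Set.mem_Icc] at ha hc
  have ha' : a = H.ys (⟨j, h1⟩ : Fin H.n).succ := le_antisymm ha.2 ha.1
  have hc2 : 0 ≤ c := le_trans (le_min (H.h_pos _).le (H.h_pos _).le) hc.1
  rcases le_or_gt c (H.h ⟨j, h1⟩) with hcl | hcl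
  · refine H.mem_region_of_top ⟨j, h1⟩ ?_ ?_ hc2 hcl
    · rw [ha']
      exact H.ys_mono.monotone (Fin.castSucc_lt_succ).le
    · rw [ha']
  · have hcl' : c ≤ H.h ⟨j + 1, h2⟩ := by
      rcases le_max_iff.1 hc.2 with h | h
      · exact absurd h (not_le.2 hcl)
      · exact h
    refine H.mem_region_of_top ⟨j + 1, h2⟩ ?_ ?_ hc2 hcl'
    · rw [ha', ← hxeq]
    · rw [ha', ← hxeq]
      exact H.ys_mono.monotone (Fin.castSucc_lt_succ).le

lemma covis_base :
    H.covisible (H.xs (⟨0, H.hm⟩ : Fin H.m).castSucc, H.d ⟨0, H.hm⟩)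
      (H.ys (⟨0, H.hn⟩ : Fin H.n).castSucc, H.h ⟨0, H.hn⟩) := by
  have hx0 : (⟨0, H.hm⟩ : Fin H.m).castSucc = (0 : Fin (H.m + 1)) := by
    apply Fin.ext; simp
  have hy0 : (⟨0, H.hn⟩ : Fin H.n).castSucc = (0 : Fin (H.n + 1)) := by
    apply Fin.ext; simp
  have hxy : H.ys (⟨0, H.hn⟩ : Fin H.n).castSucc =
      H.xs (⟨0, H.hm⟩ : Fin H.m).castSucc := by
    rw [hx0, hy0]; exact H.left_eq
  rintro ⟨a, c⟩ ⟨ha, hc⟩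
  simp only [hxy, min_self, max_self, Set.mem_Icc] at ha hc
  have ha' : a = H.xs (⟨0, H.hm⟩ : Fin H.m).castSucc := le_antisymm ha.2 ha.1
  have hmin : min (H.d ⟨0, H.hm⟩) (H.h ⟨0, H.hn⟩) = H.d ⟨0, H.hm⟩ :=
    min_eq_left ((H.d_neg _).le.trans (H.h_pos _).le)
  have hmax : max (H.d ⟨0, H.hm⟩) (H.h ⟨0, H.hn⟩) = H.h ⟨0, H.hn⟩ :=
    max_eq_right ((H.d_neg _).le.trans (H.h_pos _).le)
  rw [hmin, hmax] at hc
  rcases le_or_gt c 0 with hc0 | hc0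
  · refine H.mem_region_of_bot ⟨0, H.hm⟩ ?_ ?_ hc.1 hc0
    · rw [ha']
    · rw [ha']
      exact H.xs_mono.monotone (Fin.castSucc_lt_succ).le
  · refine H.mem_region_of_top ⟨0, H.hn⟩ ?_ ?_ hc0.le hc.2
    · rw [ha', ← hxy]
    · rw [ha', ← hxy]
      exact H.ys_mono.monotone (Fin.castSucc_lt_succ).le

/-- The base vertex used for the connectivity argument. -/
noncomputable def vb : ↥H.verts :=
  ⟨(H.xs (⟨0, H.hm⟩ : Fin H.m).castSucc, H.d ⟨0, H.hm⟩), H.botL_mem _⟩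

lemma adj_of_covis {p q : ℝ × ℝ} (hp : p ∈ H.verts) (hq : q ∈ H.verts)
    (hne : p ≠ q) (hcov : H.covisible p q) :
    H.visGraph.Adj ⟨p, hp⟩ ⟨q, hq⟩ :=
  And.intro (fun h => hne (congrArg Subtype.val h)) hcov

lemma reach_botL : ∀ (i : ℕ) (h : i < H.m),
    H.visGraph.Reachable
      ⟨(H.xs (⟨i, h⟩ : Fin H.m).castSucc, H.d ⟨i, h⟩), H.botL_mem _⟩ H.vb := by
  intro i
  induction i with
  | zero => intro h; exact SimpleGraph.Reachable.refl _
  | succ i ih =>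
    intro h2
    have h1 : i < H.m := Nat.lt_of_succ_lt h2
    have hadj1 : H.visGraph.Adj
        ⟨(H.xs (⟨i + 1, h2⟩ : Fin H.m).castSucc, H.d ⟨i + 1, h2⟩), H.botL_mem _⟩
        ⟨(H.xs (⟨i, h1⟩ : Fin H.m).succ, H.d ⟨i, h1⟩), H.botR_mem _⟩ := by
      refine H.adj_of_covis _ _ ?_ (H.covisible_symm (H.covis_vert_bot i h1 h2))
      intro heq
      have : H.d ⟨i + 1, h2⟩ = H.d ⟨i, h1⟩ := congrArg Prod.snd heq
      have := H.d_inj this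
      simp [Fin.ext_iff] at this
    have hadj2 : H.visGraph.Adj
        ⟨(H.xs (⟨i, h1⟩ : Fin H.m).succ, H.d ⟨i, h1⟩), H.botR_mem _⟩
        ⟨(H.xs (⟨i, h1⟩ : Fin H.m).castSucc, H.d ⟨i, h1⟩), H.botL_mem _⟩ := by
      refine H.adj_of_covis _ _ ?_ (H.covisible_symm (H.covis_horiz_bot _))
      intro heq
      have : H.xs (⟨i, h1⟩ : Fin H.m).succ = H.xs (⟨i, h1⟩ : Fin H.m).castSucc :=
        congrArg Prod.fst heq
      exact absurd (H.xs_mono.injective this)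
        (by simp [Fin.ext_iff])
    exact (hadj1.reachable.trans hadj2.reachable).trans (ih h1)

lemma reach_topL : ∀ (j : ℕ) (h : j < H.n),
    H.visGraph.Reachable
      ⟨(H.ys (⟨j, h⟩ : Fin H.n).castSucc, H.h ⟨j, h⟩), H.topL_mem _⟩ H.vb := by
  have hbase : H.visGraph.Reachable
      ⟨(H.ys (⟨0, H.hn⟩ : Fin H.n).castSucc, H.h ⟨0, H.hn⟩), H.topL_mem _⟩ H.vb := by
    refine SimpleGraph.Adj.reachable ?_
    refine H.adj_of_covis _ _ ?_ (H.covisible_symm H.covis_base)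
    intro heq
    have : H.h ⟨0, H.hn⟩ = H.d ⟨0, H.hm⟩ := congrArg Prod.snd heq
    exact absurd (this ▸ H.h_pos ⟨0, H.hn⟩) (not_lt.2 (H.d_neg ⟨0, H.hm⟩).le)
  intro j
  induction j with
  | zero => intro h; exact hbase
  | succ j ih =>
    intro h2
    have h1 : j < H.n := Nat.lt_of_succ_lt h2
    have hadj1 : H.visGraph.Adj
        ⟨(H.ys (⟨j + 1, h2⟩ : Fin H.n).castSucc, H.h ⟨j + 1, h2⟩), H.topL_mem _⟩
        ⟨(H.ys (⟨j, h1⟩ : Fin H.n).succ, H.h ⟨j, h1⟩), H.topR_mem _⟩ := by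
      refine H.adj_of_covis _ _ ?_ (H.covisible_symm (H.covis_vert_top j h1 h2))
      intro heq
      have : H.h ⟨j + 1, h2⟩ = H.h ⟨j, h1⟩ := congrArg Prod.snd heq
      have := H.h_inj this
      simp [Fin.ext_iff] at this
    have hadj2 : H.visGraph.Adj
        ⟨(H.ys (⟨j, h1⟩ : Fin H.n).succ, H.h ⟨j, h1⟩), H.topR_mem _⟩
        ⟨(H.ys (⟨j, h1⟩ : Fin H.n).castSucc, H.h ⟨j, h1⟩), H.topL_mem _⟩ := by
      refine H.adj_of_covis _ _ ?_ (H.covisible_symm (H.covis_horiz_top _))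
      intro heq
      have : H.ys (⟨j, h1⟩ : Fin H.n).succ = H.ys (⟨j, h1⟩ : Fin H.n).castSucc :=
        congrArg Prod.fst heq
      exact absurd (H.ys_mono.injective this)
        (by simp [Fin.ext_iff])
    exact (hadj1.reachable.trans hadj2.reachable).trans (ih h1)

lemma reach_all (w : ↥H.verts) : H.visGraph.Reachable w H.vb := by
  obtain ⟨w, hw⟩ := w
  rcases H.verts_cases hw with ⟨i, hi, hx⟩ | ⟨j, hj, hx⟩
  · rcases hx with hx | hx
    · have hweq : w = (H.xs i.castSucc, H.d i) := Prod.ext hx hi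
      have : (⟨w, hw⟩ : ↥H.verts) =
          ⟨(H.xs (⟨(i : ℕ), i.isLt⟩ : Fin H.m).castSucc, H.d ⟨(i : ℕ), i.isLt⟩),
            H.botL_mem _⟩ := Subtype.ext hweq
      rw [this]
      exact H.reach_botL (i : ℕ) i.isLt
    · have hweq : w = (H.xs i.succ, H.d i) := Prod.ext hx hi
      have hcast : (⟨w, hw⟩ : ↥H.verts) =
          ⟨(H.xs i.succ, H.d i), H.botR_mem _⟩ := Subtype.ext hweq
      rw [hcast]
      have hadj : H.visGraph.Adj ⟨(H.xs i.succ, H.d i), H.botR_mem _⟩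
          ⟨(H.xs i.castSucc, H.d i), H.botL_mem _⟩ := by
        refine H.adj_of_covis _ _ ?_ (H.covisible_symm (H.covis_horiz_bot _))
        intro heq
        have : H.xs i.succ = H.xs i.castSucc := congrArg Prod.fst heq
        exact absurd (H.xs_mono.injective this) (by simp [Fin.ext_iff])
      exact hadj.reachable.trans (H.reach_botL (i : ℕ) i.isLt)
  · rcases hx with hx | hx
    · have hweq : w = (H.ys j.castSucc, H.h j) := Prod.ext hx hj
      have : (⟨w, hw⟩ : ↥H.verts) =
          ⟨(H.ys (⟨(j : ℕ), j.isLt⟩ : Fin H.n).castSucc, H.h ⟨(j : ℕ), j.isLt⟩),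
            H.topL_mem _⟩ := Subtype.ext hweq
      rw [this]
      exact H.reach_topL (j : ℕ) j.isLt
    · have hweq : w = (H.ys j.succ, H.h j) := Prod.ext hx hj
      have hcast : (⟨w, hw⟩ : ↥H.verts) =
          ⟨(H.ys j.succ, H.h j), H.topR_mem _⟩ := Subtype.ext hweq
      rw [hcast]
      have hadj : H.visGraph.Adj ⟨(H.ys j.succ, H.h j), H.topR_mem _⟩
          ⟨(H.ys j.castSucc, H.h j), H.topL_mem _⟩ := by
        refine H.adj_of_covis _ _ ?_ (H.covisible_symm (H.covis_horiz_top _))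
        intro heq
        have : H.ys j.succ = H.ys j.castSucc := congrArg Prod.fst heq
        exact absurd (H.ys_mono.injective this) (by simp [Fin.ext_iff])
      exact hadj.reachable.trans (H.reach_topL (j : ℕ) j.isLt)

lemma visGraph_reachable (u v : ↥H.verts) : H.visGraph.Reachable u v :=
  (H.reach_all u).trans (H.reach_all v).symm

end DoubleHistogram

/-- In a double histogram, if `d(s,t) ≤ k` then `t ∈ I^k(s)`. -/
theorem distance_k_implies_in_Ik
    (H : DoubleHistogram) (k : ℕ) (s t : ↥H.verts)
    (hd : H.visGraph.dist s t ≤ k) :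
    (t : ℝ × ℝ) ∈ H.Ipow (s : ℝ × ℝ) k := by
  have hs : (s : ℝ × ℝ) ∈ H.verts := s.2
  revert t
  induction k with
  | zero =>
    intro t hd
    rw [Nat.le_zero] at hd
    have hr := H.visGraph_reachable s t
    have hst : s = t := by
      rcases SimpleGraph.dist_eq_zero_iff_eq_or_not_reachable.1 hd with h | h
      · exact h
      · exact absurd hr h
    rw [H.Ipow_zero, ← hst]
    exact Set.mem_singleton _
  | succ k ih =>
    intro t hd
    rcases Nat.lt_or_ge (H.visGraph.dist s t) (k + 1) with hlt | hge
    · have ht' := ih t (Nat.lt_succ_iff.1 hlt)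
      exact H.cover hs (H.goodAt hs k) ht' t.2
        (H.covisible_self (H.verts_subset_region t.2))
    · have heq : H.visGraph.dist s t = k + 1 := le_antisymm hd hge
      have hr := H.visGraph_reachable s t
      obtain ⟨p, hp⟩ := hr.exists_walk_length_eq_dist
      have hts : t ≠ s := by
        intro h
        rw [h, SimpleGraph.dist_self] at heq
        exact Nat.succ_ne_zero k heq.symm
      obtain ⟨w, hadj, q, hq⟩ := SimpleGraph.Walk.exists_eq_cons_of_ne hts p.reverse
      have hlen : q.length = k := by
        have h1 : p.reverse.length = k + 1 := by
          rw [SimpleGraph.Walk.length_reverse, hp, heq]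
        rw [hq] at h1
        simpa using h1
      have hdw : H.visGraph.dist s w ≤ k := by
        have := SimpleGraph.dist_le q.reverse
        rwa [SimpleGraph.Walk.length_reverse, hlen] at this
      have hw := ih w hdw
      exact H.cover hs (H.goodAt hs k) hw t.2 (H.covisible_symm (And.right hadj))
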